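/- arXiv:2409.07826 — 3 statements merged into one kernel-verified Lean document; each statement's English description precedes it below -/
import Mathlib

section
/- Let X be a set, f, g : X → X bijections, and p, q ∈ X with the forward orbits {f^n(p) : n ≥ 0} and {g^m(q) : m ≥ 0} intersecting in an infinite set. Suppose f^{n_0}(p) = g^{m_0}(q) for some n_0, m_0 ≥ 0, and let r = f^{n_0}(p). If p is not f-periodic and q is not g-periodic, then the set {(n, m) ∈ Z_{≥0}^2 : f^n(r) = g^m(r)} is infinite. -/
/-- If the forward orbits of `p` under `f` and of `q` under `g` intersect in an infinite
set, `f^{n₀}(p) = g^{m₀}(q)`, and `p`, `q` are not periodic, then, setting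
`r = f^{n₀}(p)`, the set of pairs `(n, m)` with `f^n(r) = g^m(r)` is infinite. -/
theorem infinite_pairs_of_common_point {X : Type*} (f g : Equiv.Perm X) (p q : X)
    (h : ({x | ∃ n : ℕ, (⇑f)^[n] p = x} ∩ {x | ∃ m : ℕ, (⇑g)^[m] q = x}).Infinite)
    (n₀ m₀ : ℕ) (hpq : (⇑f)^[n₀] p = (⇑g)^[m₀] q)
    (hp : ¬ ∃ k : ℕ, 1 ≤ k ∧ (⇑f)^[k] p = p)
    (hq : ¬ ∃ k : ℕ, 1 ≤ k ∧ (⇑g)^[k] q = q)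
    (r : X) (hr : r = (⇑f)^[n₀] p) :
    {nm : ℕ × ℕ | (⇑f)^[nm.1] r = (⇑g)^[nm.2] r}.Infinite := by
  -- injectivity of a ↦ f^[a] p
  have hfinj : Function.Injective (fun a : ℕ => (⇑f)^[a] p) := by
    have key : ∀ a b : ℕ, a < b → (⇑f)^[a] p = (⇑f)^[b] p → False := by
      intro a b hlt hab
      apply hp
      refine ⟨b - a, by omega, ?_⟩
      have h2 : (⇑f)^[a] ((⇑f)^[b - a] p) = (⇑f)^[a] p := by
        rw [← Function.iterate_add_apply, show a + (b - a) = b by omega]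
        exact hab.symm
      exact (f.injective.iterate a) h2
    intro a b hab
    rcases lt_trichotomy a b with hlt | he | hgt
    · exact absurd (key a b hlt hab) not_false
    · exact he
    · exact absurd (key b a hgt hab.symm) not_false
  -- T : exponents a with f^[a] p on g's orbit
  set T : Set ℕ := {a : ℕ | ∃ b : ℕ, (⇑f)^[a] p = (⇑g)^[b] q} with hT
  have hTinf : T.Infinite := by
    apply Set.Infinite.of_image (fun a => (⇑f)^[a] p)
    apply Set.Infinite.mono _ h
    rintro x ⟨⟨a, ha⟩, ⟨b, hb⟩⟩
    exact ⟨a, ⟨b, ha.trans hb.symm⟩, ha⟩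
  -- T' : good exponents with b ≥ m₀
  set T' : Set ℕ := {a : ℕ | ∃ b : ℕ, m₀ ≤ b ∧ (⇑f)^[a] p = (⇑g)^[b] q} with hT'
  have hdiff : (T \ T').Finite := by
    have hfin : ({x | ∃ b : ℕ, b < m₀ ∧ (⇑g)^[b] q = x}).Finite := by
      have : {x | ∃ b : ℕ, b < m₀ ∧ (⇑g)^[b] q = x} =
          (fun b => (⇑g)^[b] q) '' (Set.Iio m₀) := by
        ext x; simp [Set.mem_image]
      rw [this]
      exact (Set.finite_Iio m₀).image _
    have hsub : (T \ T') ⊆ (fun a : ℕ => (⇑f)^[a] p) ⁻¹' {x | ∃ b : ℕ, b < m₀ ∧ (⇑g)^[b] q = x} := by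
      rintro a ⟨⟨b, hb⟩, hnot⟩
      refine ⟨b, ?_, hb.symm⟩
      by_contra hge
      exact hnot ⟨b, by omega, hb⟩
    exact (hfin.preimage (hfinj.injOn)).subset hsub
  have hT'inf : T'.Infinite := by
    have := hTinf.diff hdiff
    apply this.mono
    intro a ha
    simp only [Set.mem_diff] at ha
    rcases ha with ⟨haT, hnot⟩
    by_contra hcon
    exact hnot ⟨haT, hcon⟩
  -- restrict to a ≥ n₀
  have hT''inf : (T' \ Set.Iio n₀).Infinite := hT'inf.diff (Set.finite_Iio n₀)
  -- map to pairs
  classical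
  set F : ℕ → ℕ × ℕ := fun a =>
    (a - n₀, (if h : a ∈ T' then Classical.choose h else 0) - m₀) with hF
  have hmem : ∀ a ∈ T' \ Set.Iio n₀, F a ∈ {nm : ℕ × ℕ | (⇑f)^[nm.1] r = (⇑g)^[nm.2] r} := by
    rintro a ⟨haT', han⟩
    simp only [Set.mem_Iio, not_lt] at han
    have hspec := Classical.choose_spec haT'
    set b := Classical.choose haT' with hb
    simp only [hF, Set.mem_setOf_eq, dif_pos haT']
    rw [hr, ← Function.iterate_add_apply, show a - n₀ + n₀ = a by omega,
      hpq, ← Function.iterate_add_apply, show b - m₀ + m₀ = b by omega]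
    exact hspec.2
  have hinjOn : Set.InjOn F (T' \ Set.Iio n₀) := by
    rintro a ⟨_, ha⟩ a' ⟨_, ha'⟩ heq
    simp only [Set.mem_Iio, not_lt] at ha ha'
    have := congrArg Prod.fst heq
    simp only [hF] at this
    omega
  have himg := hT''inf.image hinjOn
  exact himg.mono (by rintro x ⟨a, ha, rfl⟩; exact hmem a ha)
end

section
/- Let X be a set, f, g : X → X bijections, p, q ∈ X, and n, m nonzero integers. If the set O_f(p) ∩ O_g(q) of common orbit points is infinite, then there exist points p', q' ∈ X such that O_{f^n}(p') ∩ O_{g^m}(q') is infinite. -/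
/-!
Writing `k = n * (k / n) + k % n` with `0 ≤ k % n < |n|`, the `f`-orbit of `p` is the union of
the `|n|` orbits of `f ^ n` through `p, f p, …, f ^ (|n| - 1) p`. Hence the infinite set
`O_f(p) ∩ O_g(q)` is covered by finitely many sets `O_{f^n}(f^l p) ∩ O_{g^m}(g^l' q)`, one of
which must be infinite.
-/

namespace Equiv.Perm

variable {X : Type*}

def zorbit (f : Perm X) (p : X) : Set X := {x | ∃ k : ℤ, (f ^ k) p = x}

theorem zorbit_subset_biUnion_zorbit_zpow (f : Perm X) (p : X) {n : ℤ} (hn : n ≠ 0) :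
    zorbit f p ⊆ ⋃ l ∈ Finset.range n.natAbs, zorbit (f ^ n) ((f ^ (l : ℤ)) p) := by
  rintro x ⟨k, rfl⟩
  have hrem : ((k % n).toNat : ℤ) = k % n := Int.toNat_of_nonneg (Int.emod_nonneg k hn)
  simp only [Set.mem_iUnion, Finset.mem_range]
  refine ⟨(k % n).toNat, by have := Int.emod_lt k hn; omega, k / n, ?_⟩
  rw [hrem, ← mul_apply, ← zpow_mul, ← zpow_add, Int.mul_ediv_add_emod]

theorem zorbit_inter_subset_biUnion_zpow (f g : Perm X) (p q : X) {n m : ℤ} (hn : n ≠ 0)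
    (hm : m ≠ 0) :
    zorbit f p ∩ zorbit g q ⊆ ⋃ l ∈ Finset.range n.natAbs, ⋃ l' ∈ Finset.range m.natAbs,
      zorbit (f ^ n) ((f ^ (l : ℤ)) p) ∩ zorbit (g ^ m) ((g ^ (l' : ℤ)) q) := by
  rintro x ⟨hf, hg⟩
  obtain ⟨l, hl, hfl⟩ := Set.mem_iUnion₂.mp (zorbit_subset_biUnion_zorbit_zpow f p hn hf)
  obtain ⟨l', hl', hgl'⟩ := Set.mem_iUnion₂.mp (zorbit_subset_biUnion_zorbit_zpow g q hm hg)
  exact Set.mem_iUnion₂.mpr ⟨l, hl, Set.mem_iUnion₂.mpr ⟨l', hl', hfl, hgl'⟩⟩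

end Equiv.Perm

open Equiv.Perm in
/-- If the full orbits of `p` under `f` and of `q` under `g` intersect in an infinite
set, then for any nonzero integers `n, m` there are points `p', q'` whose full orbits
under `f^n` and `g^m` intersect in an infinite set. -/
theorem infinite_orbit_inter_of_iterates {X : Type*} (f g : Equiv.Perm X) (p q : X)
    (n m : ℤ) (hn : n ≠ 0) (hm : m ≠ 0)
    (h : ({x | ∃ k : ℤ, (f ^ k) p = x} ∩ {x | ∃ k : ℤ, (g ^ k) q = x}).Infinite) :
    ∃ p' q' : X,
      ({x | ∃ k : ℤ, ((f ^ n) ^ k) p' = x} ∩ {x | ∃ k : ℤ, ((g ^ m) ^ k) q' = x}).Infinite := by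
  by_contra! hfin
  refine h (Set.Finite.subset ?_ (zorbit_inter_subset_biUnion_zpow f g p q hn hm))
  exact Set.Finite.biUnion (Finset.finite_toSet _) fun l _ =>
    Set.Finite.biUnion (Finset.finite_toSet _) fun l' _ => hfin _ _
end

section
/- Let X be a compact topological space, X_0 ⊂ X an open subset, f : X → X a homeomorphism, and p_+, p_- ∈ X \ X_0 two distinct points with the following properties: (a) there is a basis of open neighbourhoods U^+ of p_+ with f(closure(U^+)) ⊂ U^+ and f^k(x) → p_+ for all x ∈ U^+; (b) there is a basis of open neighbourhoods U^- of p_- with f^{-1}(closure(U^-)) ⊂ U^- and f^{-k}(x) → p_- for all x ∈ U^-; (c) every point q ∈ X \ X_0 with q ≠ p_- satisfies f^l(q) = p_+ for some l ≥ 0. If x ∈ X_0 is such that the forward orbit {f^n(x) : n ≥ 0} has no accumulation point in X_0, then f^n(x) → p_+. -/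
/-!
Pick an attracting neighbourhood `U` of `p₊` and a repelling neighbourhood `V` of `p₋` missing
`x`. Since `f⁻¹ V ⊆ V`, the forward orbit of `x` never enters `V`, so a cluster point `q` of the
orbit (which exists by compactness) is neither `p₋` nor, by assumption, in `X₀`. Hence some
iterate of `q` is `p₊`; cluster points of an orbit are forward invariant, so the orbit enters `U`
and from then on converges to `p₊`.
-/

open Filter Topology

theorem Function.tendsto_iterate_of_iterate_mem {α : Type*} [TopologicalSpace α] {f : α → α}
    {U : Set α} {p x : α} (hU : ∀ y ∈ U, Tendsto (fun k : ℕ => f^[k] y) atTop (𝓝 p)) {N : ℕ}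
    (hN : f^[N] x ∈ U) : Tendsto (fun n : ℕ => f^[n] x) atTop (𝓝 p) := by
  refine (tendsto_add_atTop_iff_nat N).mp ?_
  simpa only [Function.iterate_add_apply] using hU _ hN

theorem Equiv.iterate_notMem_of_mapsTo_symm {α : Type*} (e : α ≃ α) {V : Set α}
    (hV : Set.MapsTo e.symm V V) {x : α} (hx : x ∉ V) (n : ℕ) : e^[n] x ∉ V := by
  induction n with
  | zero => exact hx
  | succ n ih =>
    intro h
    apply ih
    simpa only [Function.iterate_succ_apply', Equiv.symm_apply_apply] using hV h

theorem MapClusterPt.iterate_of_orbit {X : Type*} [TopologicalSpace X] {f : X → X}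
    (hf : Continuous f) {x q : X} (hq : MapClusterPt q atTop (fun n : ℕ => f^[n] x)) (l : ℕ) :
    MapClusterPt (f^[l] q) atTop (fun n : ℕ => f^[n] x) := by
  have hshift : MapClusterPt (f^[l] q) atTop (fun n : ℕ => f^[l] (f^[n] x)) :=
    hq.continuousAt_comp (hf.iterate l).continuousAt
  refine MapClusterPt.of_comp (tendsto_add_atTop_nat l) ?_
  simpa only [Function.comp_def, ← Function.iterate_add_apply, Nat.add_comm l] using hshift

theorem forward_orbit_tendsto_attracting_point_general {X : Type*} [TopologicalSpace X]
    [CompactSpace X] [T2Space X] (X₀ : Set X)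
    (f : X ≃ₜ X)
    (pp pm : X) (hpm : pm ∈ X₀ᶜ)
    (ha : ∀ W ∈ nhds pp, ∃ U ∈ nhds pp, IsOpen U ∧ U ⊆ W ∧
      f '' closure U ⊆ U ∧
      ∀ x ∈ U, Filter.Tendsto (fun k : ℕ => (⇑f)^[k] x) Filter.atTop (nhds pp))
    (hb : ∀ W ∈ nhds pm, ∃ U ∈ nhds pm, IsOpen U ∧ U ⊆ W ∧
      (⇑f.symm) '' closure U ⊆ U ∧
      ∀ x ∈ U, Filter.Tendsto (fun k : ℕ => (⇑f.symm)^[k] x) Filter.atTop (nhds pm))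
    (hc : ∀ q ∈ X₀ᶜ, q ≠ pm → ∃ l : ℕ, (⇑f)^[l] q = pp)
    (x : X) (hx : x ∈ X₀)
    (hacc : ¬ ∃ y ∈ X₀, MapClusterPt y Filter.atTop (fun n : ℕ => (⇑f)^[n] x)) :
    Filter.Tendsto (fun n : ℕ => (⇑f)^[n] x) Filter.atTop (nhds pp) := by
  obtain ⟨U, hU, -, -, -, hUtend⟩ := ha Set.univ univ_mem
  have hxpm : pm ≠ x := fun h => hpm (h ▸ hx)
  obtain ⟨V, hV, -, hVx, hVinv, -⟩ := hb _ (compl_singleton_mem_nhds hxpm)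
  have hV_maps : Set.MapsTo f.symm V V := fun y hy => hVinv ⟨y, subset_closure hy, rfl⟩
  have horbit_V : ∀ n, (⇑f)^[n] x ∉ V :=
    f.toEquiv.iterate_notMem_of_mapsTo_symm hV_maps fun h => hVx h rfl
  obtain ⟨q, hq⟩ := exists_clusterPt_of_compactSpace (map (fun n : ℕ => (⇑f)^[n] x) atTop)
  have hq : MapClusterPt q atTop (fun n : ℕ => (⇑f)^[n] x) := hq
  have hqX₀ : q ∈ X₀ᶜ := fun h => hacc ⟨q, h, hq⟩
  have hqpm : q ≠ pm := by
    rintro rfl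
    obtain ⟨n, hn⟩ := (mapClusterPt_iff_frequently.mp hq V hV).exists
    exact horbit_V n hn
  obtain ⟨l, hl⟩ := hc q hqX₀ hqpm
  have hpp : MapClusterPt pp atTop (fun n : ℕ => (⇑f)^[n] x) :=
    hl ▸ hq.iterate_of_orbit f.continuous l
  obtain ⟨N, hN⟩ := (mapClusterPt_iff_frequently.mp hpp U hU).exists
  exact Function.tendsto_iterate_of_iterate_mem hUtend hN

/-- Let `X` be a compact Hausdorff space, `X₀ ⊆ X` open and invariant under a
homeomorphism `f`, and `p₊ ≠ p₋` two points of `X \ X₀` such that: `p₊` has a basis of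
open neighbourhoods `U` with `f(cl U) ⊆ U` on which all forward orbits converge to `p₊`;
`p₋` has a basis of open neighbourhoods `U` with `f⁻¹(cl U) ⊆ U` on which all backward
orbits converge to `p₋`; and every `q ∈ X \ X₀` with `q ≠ p₋` satisfies `fˡ(q) = p₊` for
some `l ≥ 0`. If `x ∈ X₀` and the forward orbit of `x` has no accumulation point in
`X₀`, then `fⁿ(x) → p₊`. -/
theorem forward_orbit_tendsto_attracting_point {X : Type*} [TopologicalSpace X]
    [CompactSpace X] [T2Space X] (X₀ : Set X) (hX₀ : IsOpen X₀)
    (f : X ≃ₜ X) (hfX₀ : f '' X₀ = X₀)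
    (pp pm : X) (hpp : pp ∈ X₀ᶜ) (hpm : pm ∈ X₀ᶜ) (hne : pp ≠ pm)
    (ha : ∀ W ∈ nhds pp, ∃ U ∈ nhds pp, IsOpen U ∧ U ⊆ W ∧
      f '' closure U ⊆ U ∧
      ∀ x ∈ U, Filter.Tendsto (fun k : ℕ => (⇑f)^[k] x) Filter.atTop (nhds pp))
    (hb : ∀ W ∈ nhds pm, ∃ U ∈ nhds pm, IsOpen U ∧ U ⊆ W ∧
      (⇑f.symm) '' closure U ⊆ U ∧
      ∀ x ∈ U, Filter.Tendsto (fun k : ℕ => (⇑f.symm)^[k] x) Filter.atTop (nhds pm))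
    (hc : ∀ q ∈ X₀ᶜ, q ≠ pm → ∃ l : ℕ, (⇑f)^[l] q = pp)
    (x : X) (hx : x ∈ X₀)
    (hacc : ¬ ∃ y ∈ X₀, MapClusterPt y Filter.atTop (fun n : ℕ => (⇑f)^[n] x)) :
    Filter.Tendsto (fun n : ℕ => (⇑f)^[n] x) Filter.atTop (nhds pp) :=
  forward_orbit_tendsto_attracting_point_general X₀ f pp pm hpm ha hb hc x hx hacc
end
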